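/- Let p be a prime with p ≥ 5 and P = p#. The number of x ∈ ℤ/Pℤ such that x and x + 8 are units of ℤ/Pℤ while x + 2, x + 4, x + 6 are not units equals Π_{5 ≤ q ≤ p}(q − 2) − 2·Π_{5 ≤ q ≤ p}(q − 3) + Π_{5 ≤ q ≤ p}(q − 4), products taken over primes q. -/
import Mathlib

open Finset

noncomputable def cnt (n : ℕ) (L : Finset ℕ) : ℕ :=
  Nat.card {x : ZMod n // ∀ a ∈ L, IsUnit (x + (a : ZMod n))}

lemma prod_isUnit_iff {M N : Type*} [Monoid M] [Monoid N] (x : M × N) :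
    IsUnit x ↔ IsUnit x.1 ∧ IsUnit x.2 := by
  constructor
  · intro h
    exact ⟨h.map (MonoidHom.fst M N), h.map (MonoidHom.snd M N)⟩
  · rintro ⟨⟨u, hu⟩, ⟨v, hv⟩⟩
    exact ⟨MulEquiv.prodUnits.symm (u, v), by simp [MulEquiv.prodUnits, hu, hv]⟩

lemma cnt_one (L : Finset ℕ) : cnt 1 L = 1 := by
  rw [cnt, Nat.card_eq_fintype_card]
  rw [Fintype.card_eq_one_iff]
  refine ⟨⟨0, fun a _ => isUnit_of_subsingleton _⟩, fun y => ?_⟩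
  exact Subtype.ext (Subsingleton.elim _ _)

lemma cnt_mul {m n : ℕ} (h : Nat.Coprime m n) (L : Finset ℕ) :
    cnt (m * n) L = cnt m L * cnt n L := by
  classical
  have e := ZMod.chineseRemainder h
  rw [cnt, cnt, cnt, ← Nat.card_prod]
  apply Nat.card_congr
  refine Equiv.trans (Equiv.subtypeEquiv e.toEquiv ?_) Equiv.subtypeProdEquivProd
  intro x
  have key : ∀ a : ℕ, IsUnit (x + (a : ZMod (m*n))) ↔
      (IsUnit ((e x).1 + (a : ZMod m)) ∧ IsUnit ((e x).2 + (a : ZMod n))) := by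
    intro a
    have h1 : e (x + (a : ZMod (m*n))) = (( e x).1 + (a : ZMod m), (e x).2 + (a : ZMod n)) := by
      rw [map_add, map_natCast]
      rfl
    have h2 : IsUnit (x + (a : ZMod (m*n))) ↔ IsUnit (e (x + (a : ZMod (m*n)))) := by
      constructor
      · intro hh; exact hh.map e.toRingHom
      · intro hh
        have := hh.map e.symm.toRingHom
        simpa using this
    rw [h2, h1, prod_isUnit_iff]
  constructor
  · intro hx
    exact ⟨fun a ha => ((key a).mp (hx a ha)).1, fun a ha => ((key a).mp (hx a ha)).2⟩
  · rintro ⟨h1, h2⟩ a ha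
    exact (key a).mpr ⟨h1 a ha, h2 a ha⟩

lemma cnt_prod (S : Finset ℕ) (hS : ∀ q ∈ S, q.Prime) (L : Finset ℕ) :
    cnt (∏ q ∈ S, q) L = ∏ q ∈ S, cnt q L := by
  classical
  induction S using Finset.cons_induction with
  | empty => simpa using cnt_one L
  | cons q S hq ih =>
    rw [Finset.prod_cons, Finset.prod_cons]
    have hcop : Nat.Coprime q (∏ r ∈ S, r) := by
      apply Nat.Coprime.prod_right
      intro r hr
      exact (Nat.coprime_primes (hS q (Finset.mem_cons_self q S))
        (hS r (Finset.mem_cons_of_mem hr))).mpr (fun h => hq (h ▸ hr))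
    rw [cnt_mul hcop, ih (fun r hr => hS r (Finset.mem_cons_of_mem hr))]

lemma cnt_prime {q : ℕ} (hq : q.Prime) (h5 : 5 ≤ q) {L : Finset ℕ}
    (hL : L ⊆ {0, 2, 4, 6, 8}) : cnt q L = q - L.card := by
  classical
  haveI : Fact q.Prime := ⟨hq⟩
  have key2 : ∀ a b : ℕ, a < b → a % 2 = 0 → b % 2 = 0 → b ≤ 8 → a ≡ b [MOD q] → False := by
    intro a b hab ha2 hb2 hb8 h
    have hd : q ∣ b - a := (Nat.modEq_iff_dvd' hab.le).mp h
    have hq8 : q ≤ b - a := Nat.le_of_dvd (by omega) hd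
    have : q ≤ 8 := by omega
    interval_cases q
    · omega
    · exact absurd hq (by norm_num)
    · omega
    · exact absurd hq (by norm_num)
  have key : ∀ a ∈ L, ∀ b ∈ L, (a : ZMod q) = (b : ZMod q) → a = b := by
    intro a ha b hb hab
    have ha' : a % 2 = 0 ∧ a ≤ 8 := by
      have := hL ha; simp [Finset.mem_insert] at this; omega
    have hb' : b % 2 = 0 ∧ b ≤ 8 := by
      have := hL hb; simp [Finset.mem_insert] at this; omega
    rw [ZMod.natCast_eq_natCast_iff] at hab
    by_contra hne
    rcases Nat.lt_or_ge a b with h | h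
    · exact key2 a b h ha'.1 hb'.1 hb'.2 hab
    · exact key2 b a (by omega) hb'.1 ha'.1 ha'.2 hab.symm
  rw [cnt, Nat.card_eq_fintype_card, Fintype.card_subtype]
  have hset : (univ.filter (fun x : ZMod q => ∀ a ∈ L, IsUnit (x + (a : ZMod q)))) =
      univ \ L.image (fun a : ℕ => -(a : ZMod q)) := by
    ext x
    simp only [Finset.mem_filter, Finset.mem_univ, true_and, Finset.mem_sdiff,
      Finset.mem_image, isUnit_iff_ne_zero]
    constructor
    · intro h
      rintro ⟨a, ha, rfl⟩
      exact h a ha (by ring)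
    · intro h a ha hx
      exact h ⟨a, ha, by linear_combination -hx⟩
  rw [hset, Finset.card_sdiff_of_subset (Finset.subset_univ _), Finset.card_univ, ZMod.card,
    Finset.card_image_of_injOn]
  intro a ha b hb hab
  exact key a ha b hb (neg_inj.mp hab)

lemma cnt_zero {P : ℕ} (h3 : 3 ∣ P) {L : Finset ℕ} (h0 : 0 ∈ L) (h4 : 4 ∈ L) (h8 : 8 ∈ L) :
    cnt P L = 0 := by
  rw [cnt, Nat.card_eq_zero]
  left
  constructor
  rintro ⟨x, hx⟩
  let f := ZMod.castHom h3 (ZMod 3)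
  have hmap : ∀ a : ℕ, a ∈ L → IsUnit (f x + (a : ZMod 3)) := by
    intro a ha
    have := (hx a ha).map f
    rwa [map_add, map_natCast] at this
  have u0 := hmap 0 h0
  have u4 := hmap 4 h4
  have u8 := hmap 8 h8
  have e4 : ((4 : ℕ) : ZMod 3) = 1 := by decide
  have e8 : ((8 : ℕ) : ZMod 3) = 2 := by decide
  rw [e4] at u4
  rw [e8] at u8
  rw [Nat.cast_zero, add_zero] at u0
  revert u0 u4 u8
  generalize f x = y
  revert y
  decide
theorem K8_formula (p : ℕ) (hp : p.Prime) (hp5 : 5 ≤ p) (P : ℕ) (hP : P = primorial p) :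
    (Nat.card {x : ZMod P // IsUnit x ∧ IsUnit (x + 8) ∧
        ¬IsUnit (x + 2) ∧ ¬IsUnit (x + 4) ∧ ¬IsUnit (x + 6)} : ℤ) =
      ∏ q ∈ (Finset.range (p + 1)).filter (fun q => q.Prime ∧ 5 ≤ q), ((q : ℤ) - 2) -
      2 * ∏ q ∈ (Finset.range (p + 1)).filter (fun q => q.Prime ∧ 5 ≤ q), ((q : ℤ) - 3) +
      ∏ q ∈ (Finset.range (p + 1)).filter (fun q => q.Prime ∧ 5 ≤ q), ((q : ℤ) - 4) := by
  classical
  have hP0 : P ≠ 0 := by rw [hP]; exact (primorial_pos p).ne'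
  haveI : NeZero P := ⟨hP0⟩
  set Q5 := (Finset.range (p + 1)).filter (fun q => q.Prime ∧ 5 ≤ q) with hQ5
  have hmem5 : ∀ q ∈ Q5, q.Prime ∧ 5 ≤ q := fun q hq => (Finset.mem_filter.mp hq).2
  have hQall : (Finset.range (p + 1)).filter Nat.Prime = insert 2 (insert 3 Q5) := by
    ext q
    simp only [hQ5, Finset.mem_insert, Finset.mem_filter, Finset.mem_range]
    constructor
    · rintro ⟨hr, hq⟩
      by_cases h2 : q = 2
      · exact Or.inl h2
      by_cases h3 : q = 3
      · exact Or.inr (Or.inl h3)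
      have h4 : q ≠ 4 := by rintro rfl; exact absurd hq (by norm_num)
      have := hq.two_le
      exact Or.inr (Or.inr ⟨hr, hq, by omega⟩)
    · rintro (rfl | rfl | ⟨hr, hq, h5⟩)
      · exact ⟨by omega, by norm_num⟩
      · exact ⟨by omega, by norm_num⟩
      · exact ⟨hr, hq⟩
  have h3ni : (3 : ℕ) ∉ Q5 := by
    simp [hQ5, Finset.mem_filter]
  have h2ni : (2 : ℕ) ∉ insert 3 Q5 := by
    simp [hQ5, Finset.mem_insert, Finset.mem_filter]
  have hPprod : P = ∏ q ∈ insert 2 (insert 3 Q5), q := by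
    rw [hP, primorial, hQall]
  have h3P : (3 : ℕ) ∣ P := by
    rw [hPprod]
    exact Finset.dvd_prod_of_mem _ (by simp)
  have hprimes : ∀ q ∈ insert 2 (insert 3 Q5), q.Prime := by
    intro q hq
    rcases Finset.mem_insert.mp hq with rfl | hq
    · norm_num
    rcases Finset.mem_insert.mp hq with rfl | hq
    · norm_num
    · exact (hmem5 q hq).1
  have hcnt : ∀ L : Finset ℕ, cnt P L = cnt 2 L * (cnt 3 L * ∏ q ∈ Q5, cnt q L) := by
    intro L
    rw [hPprod, cnt_prod _ hprimes L, Finset.prod_insert h2ni, Finset.prod_insert h3ni]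
  -- values of the eight counts
  have hv1 : cnt P {0, 8} = ∏ q ∈ Q5, (q - 2) := by
    have c2 : cnt 2 {0, 8} = 1 := by rw [cnt, Nat.card_eq_fintype_card]; decide
    have c3 : cnt 3 {0, 8} = 1 := by rw [cnt, Nat.card_eq_fintype_card]; decide
    rw [hcnt, c2, c3, one_mul, one_mul]
    exact Finset.prod_congr rfl fun q hq => by
      rw [cnt_prime (hmem5 q hq).1 (hmem5 q hq).2 (by decide)]
      rfl
  have hv2 : cnt P {0, 2, 8} = ∏ q ∈ Q5, (q - 3) := by
    have c2 : cnt 2 {0, 2, 8} = 1 := by rw [cnt, Nat.card_eq_fintype_card]; decide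
    have c3 : cnt 3 {0, 2, 8} = 1 := by rw [cnt, Nat.card_eq_fintype_card]; decide
    rw [hcnt, c2, c3, one_mul, one_mul]
    exact Finset.prod_congr rfl fun q hq => by
      rw [cnt_prime (hmem5 q hq).1 (hmem5 q hq).2 (by decide)]
      rfl
  have hv6 : cnt P {0, 6, 8} = ∏ q ∈ Q5, (q - 3) := by
    have c2 : cnt 2 {0, 6, 8} = 1 := by rw [cnt, Nat.card_eq_fintype_card]; decide
    have c3 : cnt 3 {0, 6, 8} = 1 := by rw [cnt, Nat.card_eq_fintype_card]; decide
    rw [hcnt, c2, c3, one_mul, one_mul]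
    exact Finset.prod_congr rfl fun q hq => by
      rw [cnt_prime (hmem5 q hq).1 (hmem5 q hq).2 (by decide)]
      rfl
  have hv26 : cnt P {0, 2, 6, 8} = ∏ q ∈ Q5, (q - 4) := by
    have c2 : cnt 2 {0, 2, 6, 8} = 1 := by rw [cnt, Nat.card_eq_fintype_card]; decide
    have c3 : cnt 3 {0, 2, 6, 8} = 1 := by rw [cnt, Nat.card_eq_fintype_card]; decide
    rw [hcnt, c2, c3, one_mul, one_mul]
    exact Finset.prod_congr rfl fun q hq => by
      rw [cnt_prime (hmem5 q hq).1 (hmem5 q hq).2 (by decide)]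
      rfl
  have hz1 : cnt P {0, 4, 8} = 0 := cnt_zero h3P (by decide) (by decide) (by decide)
  have hz2 : cnt P {0, 2, 4, 8} = 0 := cnt_zero h3P (by decide) (by decide) (by decide)
  have hz3 : cnt P {0, 4, 6, 8} = 0 := cnt_zero h3P (by decide) (by decide) (by decide)
  have hz4 : cnt P {0, 2, 4, 6, 8} = 0 := cnt_zero h3P (by decide) (by decide) (by decide)
  -- counting via sums of indicators
  have hNE : ∀ pr : ZMod P → Prop,
      (Nat.card {x : ZMod P // pr x} : ℤ) = ∑ x : ZMod P, if pr x then (1 : ℤ) else 0 := by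
    intro pr
    rw [Nat.card_eq_fintype_card, Fintype.card_subtype, Finset.card_filter]
    push_cast
    rfl
  have hc : ∀ L : Finset ℕ, (cnt P L : ℤ) =
      ∑ x : ZMod P, if (∀ a ∈ L, IsUnit (x + (a : ZMod P))) then (1 : ℤ) else 0 := by
    intro L
    rw [cnt, hNE]
    exact Finset.sum_congr rfl fun x _ => by split_ifs <;> rfl
  have main : (Nat.card {x : ZMod P // IsUnit x ∧ IsUnit (x + 8) ∧
        ¬IsUnit (x + 2) ∧ ¬IsUnit (x + 4) ∧ ¬IsUnit (x + 6)} : ℤ) =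
      (cnt P {0, 8} : ℤ) - (cnt P {0, 2, 8} : ℤ) - (cnt P {0, 4, 8} : ℤ) - (cnt P {0, 6, 8} : ℤ)
        + (cnt P {0, 2, 4, 8} : ℤ) + (cnt P {0, 2, 6, 8} : ℤ) + (cnt P {0, 4, 6, 8} : ℤ)
        - (cnt P {0, 2, 4, 6, 8} : ℤ) := by
    rw [hNE, hc, hc, hc, hc, hc, hc, hc, hc]
    rw [← Finset.sum_sub_distrib, ← Finset.sum_sub_distrib, ← Finset.sum_sub_distrib,
      ← Finset.sum_add_distrib, ← Finset.sum_add_distrib, ← Finset.sum_add_distrib,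
      ← Finset.sum_sub_distrib]
    apply Finset.sum_congr rfl
    intro x _
    simp only [Finset.mem_insert, Finset.mem_singleton, forall_eq_or_imp, forall_eq,
      Nat.cast_ofNat, Nat.cast_zero, add_zero]
    by_cases h1 : IsUnit x <;> by_cases h2 : IsUnit (x + 2) <;> by_cases h3 : IsUnit (x + 4) <;>
      by_cases h4 : IsUnit (x + 6) <;> by_cases h5 : IsUnit (x + 8) <;>
      simp [h1, h2, h3, h4, h5]
  have hcast : ∀ k : ℕ, k ≤ 5 → ((∏ q ∈ Q5, (q - k) : ℕ) : ℤ) = ∏ q ∈ Q5, ((q : ℤ) - (k : ℤ)) := by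
    intro k hk
    rw [Nat.cast_prod]
    exact Finset.prod_congr rfl fun q hq => by
      rw [Nat.cast_sub (hk.trans (hmem5 q hq).2)]
  rw [main, hv1, hv2, hv6, hv26, hz1, hz2, hz3, hz4, hcast 2 (by norm_num),
    hcast 3 (by norm_num), hcast 4 (by norm_num)]
  push_cast
  ring
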